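/- arXiv:2502.00729 — 4 statements merged into one kernel-verified Lean document; each statement's English description precedes it below -/
import Mathlib

section
/- Let β > 0, w ∈ [0,1], and let a : ℝ≥0 → [0,1] be differentiable with 0 < a'(D) ≤ 4/β for all D ≥ 0. Define q(D,x) = e^{β a(D) x} / (e^{β a(D) x} + e^{β w}) and f(D,x) = D + 1 - x·q(D,x). Then for every x ∈ [0,1] and D ≥ 0, the partial derivative of f with respect to D is strictly positive. -/
open Real Set

theorem stmt0
    (β w : ℝ) (hβ : 0 < β) (hw : w ∈ Icc (0:ℝ) 1)
    (a a' : ℝ → ℝ)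
    (ha : ∀ D, 0 ≤ D → a D ∈ Icc (0:ℝ) 1)
    (hderiv : ∀ D, 0 ≤ D → HasDerivAt a (a' D) D)
    (hapos : ∀ D, 0 ≤ D → 0 < a' D)
    (haub : ∀ D, 0 ≤ D → a' D < 4 / β)
    (q : ℝ → ℝ → ℝ)
    (hq : ∀ D x, q D x = exp (β * a D * x) / (exp (β * a D * x) + exp (β * w)))
    (f : ℝ → ℝ → ℝ)
    (hf : ∀ D x, f D x = D + 1 - x * q D x) :
    ∀ x ∈ Icc (0:ℝ) 1, ∀ D, 0 ≤ D →
      0 < deriv (fun D' => f D' x) D := by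
  intro x hx D hD
  obtain ⟨hx0, hx1⟩ := hx
  set E := exp (β * a D * x) with hE
  set C := exp (β * w) with hC
  have hEpos : 0 < E := exp_pos _
  have hCpos : 0 < C := exp_pos _
  have hsum : 0 < E + C := by positivity
  -- derivative of inner exponent
  have h1 : HasDerivAt (fun D' => β * a D' * x) (β * a' D * x) D := by
    have := ((hderiv D hD).const_mul β).mul_const x
    simpa [mul_comm, mul_assoc, mul_left_comm] using this
  have h2 : HasDerivAt (fun D' => exp (β * a D' * x)) (β * a' D * x * E) D := by
    simpa [hE, mul_comm] using h1.exp
  have h3 : HasDerivAt (fun D' => exp (β * a D' * x) + C)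
      (β * a' D * x * E) D := h2.add_const C
  have hne : E + C ≠ 0 := ne_of_gt hsum
  have h4 : HasDerivAt (fun D' => exp (β * a D' * x) / (exp (β * a D' * x) + C))
      ((β * a' D * x * E * (E + C) - E * (β * a' D * x * E)) / (E + C) ^ 2) D := by
    exact h2.div h3 hne
  have h5 : HasDerivAt (fun D' => f D' x)
      (1 - x * ((β * a' D * x * E * (E + C) - E * (β * a' D * x * E)) / (E + C) ^ 2)) D := by
    have heq : (fun D' => f D' x)
        = fun D' => D' + 1 - x * (exp (β * a D' * x) / (exp (β * a D' * x) + C)) := by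
      funext D'
      rw [hf, hq]
    rw [heq]
    exact ((hasDerivAt_id D).add_const 1).sub ((h4.const_mul x).congr_deriv (by ring))
  rw [h5.deriv]
  have hkey : x * ((β * a' D * x * E * (E + C) - E * (β * a' D * x * E)) / (E + C) ^ 2) < 1 := by
    rw [← mul_div_assoc, div_lt_one (by positivity)]
    have hEC : 4 * (E * C) ≤ (E + C) ^ 2 := by nlinarith [sq_nonneg (E - C)]
    have ha'pos := hapos D hD
    have ha'ub := haub D hD
    have hβa' : β * a' D < 4 := by
      have := (lt_div_iff₀ hβ).mp ha'ub
      linarith [this]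
    have hECpos : 0 < E * C := mul_pos hEpos hCpos
    have hx2 : x ^ 2 ≤ 1 := by nlinarith
    have step1 : β * a' D * x ^ 2 * (E * C) ≤ β * a' D * (E * C) := by
      nlinarith [mul_nonneg (mul_nonneg hβ.le ha'pos.le) hECpos.le]
    have step2 : β * a' D * (E * C) < 4 * (E * C) := by nlinarith
    have hring : x * (β * a' D * x * E * (E + C) - E * (β * a' D * x * E))
        = β * a' D * x ^ 2 * (E * C) := by ring
    linarith [hEC]
  linarith
end

section
/- Let β > 0 and w ∈ ℝ. Define for z ∈ ℝ the function g'(z) = (1/(1+e^{−z}))·(1/(1+e^{z}))·z + 1/(1+e^{−z}). Let z₀ = −W(e^{−1}) − 1, where W is the principal branch of the Lambert W function (so W(e^{−1})·e^{W(e^{−1})} = e^{−1}). Then g'(z) < 0 for z < z₀, g'(z₀) = 0, and g'(z) > 0 for z > z₀. -/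
open Real

theorem stmt7
    (β w : ℝ) (hβ : 0 < β)
    (g' : ℝ → ℝ)
    (hg' : ∀ z, g' z = (1 / (1 + exp (-z))) * (1 / (1 + exp z)) * z + 1 / (1 + exp (-z)))
    (Wval : ℝ) (hW : Wval * exp Wval = exp (-1)) (hWpos : 0 ≤ Wval)
    (z₀ : ℝ) (hz₀ : z₀ = -Wval - 1) :
    (∀ z, z < z₀ → g' z < 0) ∧ g' z₀ = 0 ∧ (∀ z, z₀ < z → 0 < g' z) := by
  have hden : ∀ z : ℝ, 0 < (1 + exp (-z)) * (1 + exp z) := by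
    intro z; positivity
  have key : ∀ z : ℝ, g' z = (z + 1 + exp z) / ((1 + exp (-z)) * (1 + exp z)) := by
    intro z
    rw [hg', Real.exp_neg]
    have ht : (0:ℝ) < exp z := exp_pos z
    field_simp
    ring
  have hez : exp z₀ = Wval := by
    rw [hz₀, show -Wval - 1 = -1 + -Wval by ring, exp_add, ← hW, mul_assoc, ← exp_add]
    simp
  have hnum0 : z₀ + 1 + exp z₀ = 0 := by rw [hez, hz₀]; ring
  have mono : StrictMono (fun z : ℝ => z + 1 + exp z) := by
    intro a b hab
    exact add_lt_add (by linarith) (exp_lt_exp.2 hab)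
  refine ⟨?_, ?_, ?_⟩
  · intro z hz
    rw [key]
    apply div_neg_of_neg_of_pos _ (hden z)
    have := mono hz
    simp only at this
    linarith
  · rw [key, hnum0, zero_div]
  · intro z hz
    rw [key]
    apply div_pos _ (hden z)
    have := mono hz
    simp only at this
    linarith
end

section
/- Let c ∈ (0,1) and γ ∈ (0,1], and let τ, T ∈ ℕ with τ < T. Suppose x : ℕ → [0,1] is a sequence and x̲ = min{x_t : τ < t ≤ T, x_t > 0} (assumed to exist). Then Σ_{t=τ+1}^{T} γ^{t−1} x_t² Π_{i=τ+1}^{t−1} (1 − c·x_i²) ≤ Σ_{t=τ+1}^{T} γ^{t−1} (1 − c·x̲²)^{t−τ−1}, where c·x_i² ∈ [0,1) for all i. -/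
open Finset
set_option maxHeartbeats 1000000 in

lemma aux12 (c γ xmin : ℝ) (hc0 : 0 < c) (hc1 : c < 1) (hγ0 : 0 < γ) (hγ1 : γ ≤ 1)
    (hm0 : 0 < xmin) (hm1 : xmin ≤ 1) :
    ∀ n (A : ℝ) (y : ℕ → ℝ), 0 ≤ A → (∀ j, 0 ≤ y j ∧ y j ≤ 1) →
    (∀ j, j < n → 0 < y j → xmin ≤ y j) →
    ∑ j ∈ range n, A * γ ^ j * (y j) ^ 2 * ∏ i ∈ range j, (1 - c * (y i) ^ 2)
      ≤ ∑ j ∈ range n, A * γ ^ j * (1 - c * xmin ^ 2) ^ j := by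
  intro n
  induction n with
  | zero => intro A y _ _ _; simp
  | succ n ih =>
    intro A y hA hy hmin
    have hq0 : 0 ≤ 1 - c * xmin ^ 2 := by nlinarith
    have hq1 : 1 - c * xmin ^ 2 ≤ 1 := by nlinarith
    set q := 1 - c * xmin ^ 2 with hq
    have hfac : ∀ i : ℕ, 0 ≤ 1 - c * (y i) ^ 2 := by
      intro i
      have := (hy i).1; have := (hy i).2
      nlinarith
    have hS' : ∑ j ∈ range n, (A * γ) * γ ^ j * (y (j+1)) ^ 2 *
          ∏ i ∈ range j, (1 - c * (y (i+1)) ^ 2)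
        ≤ ∑ j ∈ range n, (A * γ) * γ ^ j * q ^ j := by
      apply ih (A * γ) (fun j => y (j+1)) (by positivity) (fun j => hy (j+1))
      intro j hj h
      exact hmin (j+1) (by omega) h
    have hS'0 : 0 ≤ ∑ j ∈ range n, (A * γ) * γ ^ j * (y (j+1)) ^ 2 *
          ∏ i ∈ range j, (1 - c * (y (i+1)) ^ 2) := by
      apply Finset.sum_nonneg
      intro j _
      have hp : 0 ≤ ∏ i ∈ range j, (1 - c * (y (i+1)) ^ 2) :=
        Finset.prod_nonneg fun i _ => hfac (i+1)
      have := (hy (j+1)).1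
      positivity
    have hR'0 : 0 ≤ ∑ j ∈ range n, (A * γ) * γ ^ j * q ^ j := by
      apply Finset.sum_nonneg; intro j _; positivity
    have hLsplit : ∑ j ∈ range (n+1), A * γ ^ j * (y j) ^ 2 * ∏ i ∈ range j, (1 - c * (y i) ^ 2)
        = (1 - c * (y 0) ^ 2) * (∑ j ∈ range n, (A * γ) * γ ^ j * (y (j+1)) ^ 2 *
            ∏ i ∈ range j, (1 - c * (y (i+1)) ^ 2)) + A * (y 0) ^ 2 := by
      rw [Finset.sum_range_succ', Finset.mul_sum]
      congr 1
      · apply Finset.sum_congr rfl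
        intro j _
        rw [Finset.prod_range_succ']
        ring
      · simp
    have hRsplit : ∑ j ∈ range (n+1), A * γ ^ j * q ^ j
        = q * (∑ j ∈ range n, (A * γ) * γ ^ j * q ^ j) + A := by
      rw [Finset.sum_range_succ', Finset.mul_sum]
      congr 1
      · apply Finset.sum_congr rfl
        intro j _
        ring
      · simp
    rw [hLsplit, hRsplit]
    rcases (hy 0).1.eq_or_lt with h0 | h0
    · -- y 0 = 0
      have hgeo : ∑ j ∈ range n, (A * γ) * γ ^ j * q ^ j ≤ A * ∑ j ∈ range n, q ^ j := by
        rw [Finset.mul_sum]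
        apply Finset.sum_le_sum
        intro j _
        have h1 : γ ^ j ≤ 1 := pow_le_one₀ hγ0.le hγ1
        have h2 : (0:ℝ) ≤ q ^ j := by positivity
        have h3 : γ * γ ^ j ≤ 1 := by nlinarith [pow_nonneg hγ0.le j]
        nlinarith [mul_nonneg hA h2, mul_le_of_le_one_right (mul_nonneg hA h2) h3]
      have hgs : (1 - q) * ∑ j ∈ range n, q ^ j = 1 - q ^ n := by
        have := geom_sum_mul q n
        nlinarith
      have hgs1 : (1 - q) * ∑ j ∈ range n, q ^ j ≤ 1 := by
        have : (0:ℝ) ≤ q ^ n := by positivity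
        nlinarith
      have hsum : ∑ j ∈ range n, q ^ j ≥ 0 := Finset.sum_nonneg fun j _ => by positivity
      have h1q : 0 ≤ 1 - q := by simp [hq]; positivity
      rw [← h0]
      have key : (1 - q) * ∑ j ∈ range n, (A * γ) * γ ^ j * q ^ j ≤ A := by
        calc (1 - q) * ∑ j ∈ range n, (A * γ) * γ ^ j * q ^ j
            ≤ (1 - q) * (A * ∑ j ∈ range n, q ^ j) := by
              apply mul_le_mul_of_nonneg_left hgeo h1q
          _ = A * ((1 - q) * ∑ j ∈ range n, q ^ j) := by ring
          _ ≤ A * 1 := mul_le_mul_of_nonneg_left hgs1 hA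
          _ = A := by ring
      nlinarith [hS']
    · -- y 0 > 0
      have hmy : xmin ≤ y 0 := hmin 0 (by omega) h0
      have hfq : 1 - c * (y 0) ^ 2 ≤ q := by
        have hx2 : xmin ^ 2 ≤ (y 0) ^ 2 := by nlinarith
        simp only [hq]
        nlinarith
      have hy01 : (y 0) ^ 2 ≤ 1 := by nlinarith [(hy 0).2, (hy 0).1]
      have t1a := mul_le_mul_of_nonneg_right hfq hS'0
      have t1b := mul_le_mul_of_nonneg_left hS' hq0
      have t2 : A * (y 0) ^ 2 ≤ A := by nlinarith
      linarith

theorem stmt12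
    (c γ : ℝ) (hc : c ∈ Set.Ioo (0:ℝ) 1) (hγ : γ ∈ Set.Ioc (0:ℝ) 1)
    (τ T : ℕ) (hτT : τ < T)
    (x : ℕ → ℝ) (hx : ∀ t, x t ∈ Set.Icc (0:ℝ) 1)
    (xmin : ℝ)
    (hxmin_mem : ∃ t, τ < t ∧ t ≤ T ∧ 0 < x t ∧ x t = xmin)
    (hxmin_min : ∀ t, τ < t → t ≤ T → 0 < x t → xmin ≤ x t) :
    ∑ t ∈ Finset.Icc (τ + 1) T,
        γ ^ (t - 1) * (x t) ^ 2 * ∏ i ∈ Finset.Icc (τ + 1) (t - 1), (1 - c * (x i) ^ 2)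
      ≤ ∑ t ∈ Finset.Icc (τ + 1) T, γ ^ (t - 1) * (1 - c * xmin ^ 2) ^ (t - τ - 1) := by
  obtain ⟨t0, ht0a, ht0b, ht0c, ht0d⟩ := hxmin_mem
  have hm0 : 0 < xmin := ht0d ▸ ht0c
  have hm1 : xmin ≤ 1 := ht0d ▸ (hx t0).2
  have key := aux12 c γ xmin hc.1 hc.2 hγ.1 hγ.2 hm0 hm1 (T - τ) (γ ^ τ)
    (fun j => x (τ + 1 + j)) (pow_nonneg hγ.1.le τ)
    (fun j => ⟨(hx _).1, (hx _).2⟩)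
    (fun j hj h => hxmin_min (τ + 1 + j) (by omega) (by omega) h)
  have hL : ∑ t ∈ Finset.Icc (τ + 1) T,
        γ ^ (t - 1) * (x t) ^ 2 * ∏ i ∈ Finset.Icc (τ + 1) (t - 1), (1 - c * (x i) ^ 2)
      = ∑ j ∈ range (T - τ), γ ^ τ * γ ^ j * (x (τ + 1 + j)) ^ 2 *
          ∏ i ∈ range j, (1 - c * (x (τ + 1 + i)) ^ 2) := by
    rw [← Finset.Ico_add_one_right_eq_Icc, Finset.sum_Ico_eq_sum_range]
    have hn : T + 1 - (τ + 1) = T - τ := by omega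
    rw [hn]
    apply Finset.sum_congr rfl
    intro j _
    have h1 : τ + 1 + j - 1 = τ + j := by omega
    rw [h1]
    have h2 : ∏ i ∈ Finset.Icc (τ + 1) (τ + j), (1 - c * (x i) ^ 2)
        = ∏ i ∈ range j, (1 - c * (x (τ + 1 + i)) ^ 2) := by
      rw [← Finset.Ico_add_one_right_eq_Icc, Finset.prod_Ico_eq_prod_range]
      have : τ + j + 1 - (τ + 1) = j := by omega
      rw [this]
    rw [h2, ← pow_add]
  have hR : ∑ t ∈ Finset.Icc (τ + 1) T, γ ^ (t - 1) * (1 - c * xmin ^ 2) ^ (t - τ - 1)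
      = ∑ j ∈ range (T - τ), γ ^ τ * γ ^ j * (1 - c * xmin ^ 2) ^ j := by
    rw [← Finset.Ico_add_one_right_eq_Icc, Finset.sum_Ico_eq_sum_range]
    have hn : T + 1 - (τ + 1) = T - τ := by omega
    rw [hn]
    apply Finset.sum_congr rfl
    intro j _
    have h1 : τ + 1 + j - 1 = τ + j := by omega
    have h2 : τ + 1 + j - τ - 1 = j := by omega
    rw [h1, h2, ← pow_add]
  rw [hL, hR]
  exact key
end

section
/- Let β > 0, w ∈ ℝ, and define g(y, x) = x·q̃(y)·y + (1 − x·q̃(y))·w where q̃(y) = e^{βy}/(e^{βy} + e^{βw}). Then for every fixed x > 0, ∂g/∂y = x·q̃(y)·(1 − q̃(y))·β·(y − w) + x·q̃(y), and the sign of ∂g/∂y equals the sign of y − C, where C = w − (W(e^{−1}) + 1)/β and W denotes the principal Lambert W function. -/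
/-!
Write `q = q̃(y)` and `z = β (y - w)`. Since `1 / (1 - q) = 1 + e^z`, the derivative factors as
`x q (1 - q) (z + 1 + e^z)`, a positive multiple of the strictly increasing function
`z ↦ z + 1 + e^z`. The defining equation `W e^W = e^{-1}` says exactly that this function
vanishes at `z₀ = -(W + 1)`, and `z - z₀ = β (y - C)`.
-/

open Real

namespace Real

theorem sign_eq_sign_of_pos_iff_of_neg_iff {a b : ℝ} (hpos : 0 < a ↔ 0 < b)
    (hneg : a < 0 ↔ b < 0) : sign a = sign b := by
  rcases lt_trichotomy b 0 with hb | hb | hb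
  · rw [sign_of_neg (hneg.2 hb), sign_of_neg hb]
  · have ha : a = 0 := le_antisymm (not_lt.1 fun h => (hb ▸ hpos.1 h).false)
      (not_lt.1 fun h => (hb ▸ hneg.1 h).false)
    rw [ha, hb]
  · rw [sign_of_pos (hpos.2 hb), sign_of_pos hb]

theorem sign_mul_of_pos {c : ℝ} (hc : 0 < c) (r : ℝ) : sign (c * r) = sign r :=
  sign_eq_sign_of_pos_iff_of_neg_iff (mul_pos_iff_of_pos_left hc)
    ⟨fun h => by nlinarith, fun h => mul_neg_of_pos_of_neg hc h⟩

theorem sign_div_of_pos {c : ℝ} (hc : 0 < c) (r : ℝ) : sign (r / c) = sign r := by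
  rw [div_eq_inv_mul, sign_mul_of_pos (inv_pos.2 hc)]

end Real

theorem StrictMono.sign_apply_eq_sign_sub {f : ℝ → ℝ} (hf : StrictMono f) {a : ℝ}
    (ha : f a = 0) (z : ℝ) : sign (f z) = sign (z - a) :=
  Real.sign_eq_sign_of_pos_iff_of_neg_iff (by rw [sub_pos, ← ha, hf.lt_iff_lt])
    (by rw [sub_neg, ← ha, hf.lt_iff_lt])

theorem strictMono_add_one_add_exp : StrictMono fun z : ℝ => z + 1 + exp z :=
  (strictMono_id.add_const 1).add exp_strictMono

theorem exp_neg_add_one_of_mul_exp_eq {W : ℝ} (hW : W * exp W = exp (-1)) :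
    exp (-(W + 1)) = W := by
  rw [neg_add, exp_add, ← hW, mul_comm W, ← mul_assoc, ← exp_add, neg_add_cancel, exp_zero,
    one_mul]

noncomputable def logistic (β w y : ℝ) : ℝ := exp (β * y) / (exp (β * y) + exp (β * w))

section Logistic

variable (β w : ℝ)

theorem logistic_pos (y : ℝ) : 0 < logistic β w y := by
  unfold logistic; positivity

theorem one_sub_logistic (y : ℝ) :
    1 - logistic β w y = exp (β * w) / (exp (β * y) + exp (β * w)) := by
  unfold logistic
  field_simp
  ring

theorem one_sub_logistic_pos (y : ℝ) : 0 < 1 - logistic β w y := by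
  rw [one_sub_logistic]; positivity

theorem one_sub_logistic_mul_one_add_exp (y : ℝ) :
    (1 - logistic β w y) * (1 + exp (β * (y - w))) = 1 := by
  rw [one_sub_logistic, mul_sub, exp_sub]
  field_simp
  ring

theorem hasDerivAt_logistic (y : ℝ) :
    HasDerivAt (logistic β w) (β * logistic β w y * (1 - logistic β w y)) y := by
  have hexp : HasDerivAt (fun y : ℝ => exp (β * y)) (exp (β * y) * β) y := by
    simpa using ((hasDerivAt_id y).const_mul β).exp
  refine (hexp.div (hexp.add_const (exp (β * w))) (by positivity)).congr_deriv ?_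
  rw [one_sub_logistic]
  unfold logistic
  field_simp
  ring

end Logistic

theorem HasDerivAt.welfare {q : ℝ → ℝ} {q' : ℝ} {y : ℝ} (hq : HasDerivAt q q' y) (x w : ℝ) :
    HasDerivAt (fun y => x * q y * y + (1 - x * q y) * w) (x * q' * (y - w) + x * q y) y := by
  refine (((hq.const_mul x).mul (hasDerivAt_id' y)).add
    (((hq.const_mul x).const_sub 1).mul_const w)).congr_deriv ?_
  ring

theorem welfare_deriv_eq_mul_add_one_add_exp (β w x y : ℝ) :
    x * logistic β w y * (1 - logistic β w y) * β * (y - w) + x * logistic β w y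
      = x * logistic β w y * (1 - logistic β w y)
        * (β * (y - w) + 1 + exp (β * (y - w))) := by
  linear_combination -x * logistic β w y * one_sub_logistic_mul_one_add_exp β w y

theorem stmt17_general
    (β w : ℝ) (hβ : 0 < β)
    (qt : ℝ → ℝ)
    (hqt : ∀ y, qt y = exp (β * y) / (exp (β * y) + exp (β * w)))
    (g : ℝ → ℝ → ℝ)
    (hg : ∀ y x, g y x = x * qt y * y + (1 - x * qt y) * w)
    (Wval : ℝ) (hWval : Wval * exp Wval = exp (-1))
    (C : ℝ) (hC : C = w - (Wval + 1) / β) :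
    ∀ x : ℝ, 0 < x → ∀ y : ℝ,
      HasDerivAt (fun y' => g y' x)
        (x * qt y * (1 - qt y) * β * (y - w) + x * qt y) y ∧
      Real.sign (x * qt y * (1 - qt y) * β * (y - w) + x * qt y) =
        Real.sign (y - C) := by
  intro x hx y
  obtain rfl : qt = logistic β w := funext hqt
  have hgx : (fun y' => g y' x)
      = fun y' => x * logistic β w y' * y' + (1 - x * logistic β w y') * w :=
    funext fun y' => hg y' x
  refine ⟨?_, ?_⟩
  · rw [hgx]
    convert (hasDerivAt_logistic β w y).welfare x w using 1
    ring
  · have hfactor : 0 < x * logistic β w y * (1 - logistic β w y) :=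
      mul_pos (mul_pos hx (logistic_pos β w y)) (one_sub_logistic_pos β w y)
    have hroot : -(Wval + 1) + 1 + exp (-(Wval + 1)) = 0 := by
      rw [exp_neg_add_one_of_mul_exp_eq hWval]; ring
    have hyC : y - C = (β * (y - w) - -(Wval + 1)) / β := by
      rw [hC]; field_simp; ring
    rw [welfare_deriv_eq_mul_add_one_add_exp, Real.sign_mul_of_pos hfactor,
      strictMono_add_one_add_exp.sign_apply_eq_sign_sub hroot, hyC, Real.sign_div_of_pos hβ]

theorem stmt17
    (β w : ℝ) (hβ : 0 < β)
    (qt : ℝ → ℝ)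
    (hqt : ∀ y, qt y = exp (β * y) / (exp (β * y) + exp (β * w)))
    (g : ℝ → ℝ → ℝ)
    (hg : ∀ y x, g y x = x * qt y * y + (1 - x * qt y) * w)
    (Wval : ℝ) (hWval : Wval * exp Wval = exp (-1)) (hWpos : 0 ≤ Wval)
    (C : ℝ) (hC : C = w - (Wval + 1) / β) :
    ∀ x : ℝ, 0 < x → ∀ y : ℝ,
      HasDerivAt (fun y' => g y' x)
        (x * qt y * (1 - qt y) * β * (y - w) + x * qt y) y ∧
      Real.sign (x * qt y * (1 - qt y) * β * (y - w) + x * qt y) =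
        Real.sign (y - C) :=
  stmt17_general β w hβ qt hqt g hg Wval hWval C hC
end
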